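/- Let R ≠ R' be reaction networks on the same n species, let c ∈ ℝ^n_{>0} and G = diag(c₁,…,cₙ). Then there exist positive rate vectors κ on R and κ' on R' such that for all x ∈ ℝ^n_{>0}: A_{R,κ}(x) = G A_{R',κ'}(G^{-1}x) and B_{R,κ}(x) = G B_{R',κ'}(G^{-1}x) G, if and only if R and R' have the same source complexes and for every source complex y one has Cone_R(y) ∩ Cone^G_{R'}(y) ≠ ∅. -/
import Mathlib


open Finset

abbrev Rxn (n : ℕ) : Type := (Fin n → ℕ) × (Fin n → ℕ)

noncomputable def toR {n : ℕ} (y : Fin n → ℕ) : Fin n → ℝ := fun i => (y i : ℝ)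

noncomputable def mono {n : ℕ} (x : Fin n → ℝ) (y : Fin n → ℕ) : ℝ := ∏ i, x i ^ y i

noncomputable def drift {n : ℕ} (R : Finset (Rxn n)) (κ : Rxn n → ℝ) (x : Fin n → ℝ) :
    Fin n → ℝ :=
  ∑ r ∈ R, (κ r * mono x r.1) • (toR r.2 - toR r.1)

noncomputable def diffMat {n : ℕ} (R : Finset (Rxn n)) (κ : Rxn n → ℝ) (x : Fin n → ℝ) :
    Matrix (Fin n) (Fin n) ℝ :=
  ∑ r ∈ R, (κ r * mono x r.1) • Matrix.vecMulVec (toR r.2 - toR r.1) (toR r.2 - toR r.1)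

def posOrth (n : ℕ) : Set (Fin n → ℝ) := {x | ∀ i, 0 < x i}

noncomputable def cone {n : ℕ} (R : Finset (Rxn n)) (y : Fin n → ℕ) :
    Set ((Fin n → ℝ) × Matrix (Fin n) (Fin n) ℝ) :=
  {p | ∃ α : Rxn n → ℝ,
    (∀ r ∈ R.filter (fun r => r.1 = y), 0 < α r) ∧
    p = ∑ r ∈ R.filter (fun r => r.1 = y),
      α r • (toR r.2 - toR r.1, Matrix.vecMulVec (toR r.2 - toR r.1) (toR r.2 - toR r.1))}

noncomputable def coneG {n : ℕ} (G : Matrix (Fin n) (Fin n) ℝ) (R : Finset (Rxn n))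
    (y : Fin n → ℕ) : Set ((Fin n → ℝ) × Matrix (Fin n) (Fin n) ℝ) :=
  {p | ∃ α : Rxn n → ℝ,
    (∀ r ∈ R.filter (fun r => r.1 = y), 0 < α r) ∧
    p = ∑ r ∈ R.filter (fun r => r.1 = y),
      α r • (G.mulVec (toR r.2 - toR r.1),
             G * Matrix.vecMulVec (toR r.2 - toR r.1) (toR r.2 - toR r.1) * G.transpose)}


lemma digit_inj : ∀ (n : ℕ) (M : ℕ) (y y' : Fin n → ℕ), (∀ i, y i < M) → (∀ i, y' i < M) →
    (∑ i, y i * M ^ (i : ℕ)) = (∑ i, y' i * M ^ (i : ℕ)) → y = y'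
  | 0, _, y, y', _, _, _ => Subsingleton.elim y y'
  | (n+1), M, y, y', hy, hy', h => by
    have hM : 0 < M := lt_of_le_of_lt (Nat.zero_le _) (hy 0)
    have expand : ∀ z : Fin (n+1) → ℕ,
        (∑ i, z i * M ^ (i : ℕ)) = z 0 + M * ∑ i : Fin n, z i.succ * M ^ (i : ℕ) := by
      intro z
      rw [Fin.sum_univ_succ]
      simp only [Fin.val_zero, pow_zero, mul_one, Fin.val_succ, pow_succ]
      rw [Finset.mul_sum]
      congr 1
      refine Finset.sum_congr rfl fun i _ => by ring
    rw [expand y, expand y'] at h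
    have h0 : y 0 = y' 0 := by
      have := congrArg (· % M) h
      simpa [Nat.add_mul_mod_self_left, Nat.mod_eq_of_lt (hy 0), Nat.mod_eq_of_lt (hy' 0)]
        using this
    have htail : (fun i : Fin n => y i.succ) = fun i : Fin n => y' i.succ := by
      apply digit_inj n M _ _ (fun i => hy i.succ) (fun i => hy' i.succ)
      have : M * (∑ i : Fin n, y i.succ * M ^ (i:ℕ)) = M * ∑ i : Fin n, y' i.succ * M ^ (i:ℕ) := by
        omega
      exact Nat.eq_of_mul_eq_mul_left hM this
    funext i
    refine Fin.cases h0 (fun j => ?_) i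
    exact congrFun htail j

lemma mono_indep {n : ℕ} (S : Finset (Fin n → ℕ)) (a : (Fin n → ℕ) → ℝ)
    (h : ∀ x ∈ posOrth n, ∑ y ∈ S, a y * mono x y = 0) :
    ∀ y ∈ S, a y = 0 := by
  classical
  set M : ℕ := (S.sup fun y => Finset.univ.sup y) + 1 with hM
  have hbound : ∀ y ∈ S, ∀ i, y i < M := by
    intro y hy i
    have h1 : y i ≤ S.sup fun y => Finset.univ.sup y :=
      le_trans (Finset.le_sup (f := y) (Finset.mem_univ i)) (Finset.le_sup hy)
    omega
  set e : (Fin n → ℕ) → ℕ := fun y => ∑ i, y i * M ^ (i : ℕ) with he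
  have einj : ∀ y ∈ S, ∀ y' ∈ S, e y = e y' → y = y' := fun y hy y' hy' hq =>
    digit_inj n M y y' (hbound y hy) (hbound y' hy') hq
  set p : Polynomial ℝ := ∑ y ∈ S, Polynomial.C (a y) * Polynomial.X ^ (e y) with hp
  have hp0 : p = 0 := by
    apply Polynomial.eq_zero_of_infinite_isRoot
    apply Set.Infinite.mono (s := Set.Ioi (0:ℝ)) _ (Set.Ioi_infinite (0:ℝ))
    intro t ht
    have hx : (fun i : Fin n => t ^ (M ^ (i:ℕ))) ∈ posOrth n := fun i => pow_pos ht _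
    have hmono : ∀ y : Fin n → ℕ, mono (fun i : Fin n => t ^ (M ^ (i:ℕ))) y = t ^ e y := by
      intro y
      simp only [mono, he, ← pow_mul]
      rw [← Finset.prod_pow_eq_pow_sum]
      refine Finset.prod_congr rfl fun i _ => by rw [mul_comm]
    have h0 := h _ hx
    simp only [hmono] at h0
    show p.IsRoot t
    simp only [Polynomial.IsRoot, hp, Polynomial.eval_finset_sum, Polynomial.eval_mul,
      Polynomial.eval_C, Polynomial.eval_pow, Polynomial.eval_X]
    exact h0
  intro y hy
  have hc : p.coeff (e y) = a y := by
    rw [hp, Polynomial.finset_sum_coeff]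
    rw [Finset.sum_eq_single y]
    · simp [Polynomial.coeff_C_mul, Polynomial.coeff_X_pow]
    · intro b hb hby
      simp only [Polynomial.coeff_C_mul, Polynomial.coeff_X_pow]
      rw [if_neg fun heq => hby (einj b hb y hy heq.symm), mul_zero]
    · intro hne; exact absurd hy hne
  rw [hp0] at hc
  simpa using hc.symm

abbrev Vec (n : ℕ) : Type := (Fin n → ℝ) × Matrix (Fin n) (Fin n) ℝ

lemma mono_pos {n : ℕ} {x : Fin n → ℝ} (hx : ∀ i, 0 < x i) (y : Fin n → ℕ) : 0 < mono x y :=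
  Finset.prod_pos fun i _ => pow_pos (hx i) _

lemma mono_indep_vec {n : ℕ} (S : Finset (Fin n → ℕ)) (z : (Fin n → ℕ) → Vec n)
    (h : ∀ x ∈ posOrth n, ∑ y ∈ S, mono x y • z y = 0) :
    ∀ y ∈ S, z y = 0 := by
  intro y hy
  have h1 : ∀ j, (z y).1 j = 0 := by
    intro j
    refine mono_indep S (fun y => (z y).1 j) (fun x hx => ?_) y hy
    have := congrArg (fun p : Vec n => p.1 j) (h x hx)
    simpa [Prod.fst_sum, Finset.sum_apply, mul_comm] using this
  have h2 : ∀ i j, (z y).2 i j = 0 := by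
    intro i j
    refine mono_indep S (fun y => (z y).2 i j) (fun x hx => ?_) y hy
    have := congrArg (fun p : Vec n => p.2 i j) (h x hx)
    simpa [Prod.snd_sum, Matrix.sum_apply, mul_comm] using this
  refine Prod.ext ?_ ?_
  · funext j; exact h1 j
  · ext i j; exact h2 i j

lemma group_sum {n : ℕ} (R : Finset (Rxn n)) (T : Finset (Fin n → ℕ))
    (hT : ∀ r ∈ R, r.1 ∈ T) (a : Rxn n → ℝ) (u : Rxn n → Vec n) (x : Fin n → ℝ) :
    ∑ r ∈ R, (a r * mono x r.1) • u r
      = ∑ y ∈ T, mono x y • ∑ r ∈ R.filter (fun r => r.1 = y), a r • u r := by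
  rw [← Finset.sum_fiberwise_of_maps_to hT (fun r => (a r * mono x r.1) • u r)]
  refine Finset.sum_congr rfl fun y _ => ?_
  rw [Finset.smul_sum]
  refine Finset.sum_congr rfl fun r hr => ?_
  obtain ⟨-, hr1⟩ := Finset.mem_filter.mp hr
  rw [hr1, smul_smul, mul_comm]

lemma master {n : ℕ} (R R' : Finset (Rxn n)) (a b : Rxn n → ℝ) (u w : Rxn n → Vec n) :
    (∀ x ∈ posOrth n,
      ∑ r ∈ R, (a r * mono x r.1) • u r = ∑ r ∈ R', (b r * mono x r.1) • w r)
    ↔ ∀ y : Fin n → ℕ, ∑ r ∈ R.filter (fun r => r.1 = y), a r • u r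
         = ∑ r ∈ R'.filter (fun r => r.1 = y), b r • w r := by
  classical
  set T : Finset (Fin n → ℕ) := R.image Prod.fst ∪ R'.image Prod.fst with hT
  have hT1 : ∀ r ∈ R, r.1 ∈ T := fun r hr =>
    Finset.mem_union_left _ (Finset.mem_image_of_mem _ hr)
  have hT2 : ∀ r ∈ R', r.1 ∈ T := fun r hr =>
    Finset.mem_union_right _ (Finset.mem_image_of_mem _ hr)
  constructor
  · intro h y
    set z : (Fin n → ℕ) → Vec n := fun y =>
      (∑ r ∈ R.filter (fun r => r.1 = y), a r • u r)
        - ∑ r ∈ R'.filter (fun r => r.1 = y), b r • w r with hz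
    have hzz : ∀ y ∈ T, z y = 0 := by
      refine mono_indep_vec T z fun x hx => ?_
      have := h x hx
      rw [group_sum R T hT1 a u x, group_sum R' T hT2 b w x] at this
      simp only [hz, smul_sub, Finset.sum_sub_distrib]
      rw [this, sub_self]
    by_cases hy : y ∈ T
    · have := hzz y hy
      rw [hz] at this
      exact sub_eq_zero.mp this
    · have e1 : R.filter (fun r => r.1 = y) = ∅ := by
        rw [Finset.filter_eq_empty_iff]
        intro r hr hr1
        exact hy (hr1 ▸ hT1 r hr)
      have e2 : R'.filter (fun r => r.1 = y) = ∅ := by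
        rw [Finset.filter_eq_empty_iff]
        intro r hr hr1
        exact hy (hr1 ▸ hT2 r hr)
      rw [e1, e2]
      simp
    -- done
  · intro h x hx
    rw [group_sum R T hT1 a u x, group_sum R' T hT2 b w x]
    exact Finset.sum_congr rfl fun y _ => by rw [h y]

lemma toR_sub_ne_zero {n : ℕ} {r : Rxn n} (h : r.1 ≠ r.2) : toR r.2 - toR r.1 ≠ 0 := by
  intro h0
  apply h
  have h1 : toR r.2 = toR r.1 := by
    have := sub_eq_zero.mp h0
    exact this
  funext i
  have := congrFun h1 i
  simpa [toR, Nat.cast_inj] using this.symm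

lemma sum_pair_ne_zero {n : ℕ} (t : Finset (Rxn n)) (ht : t.Nonempty) (α : Rxn n → ℝ)
    (hα : ∀ r ∈ t, 0 < α r) (v : Rxn n → Fin n → ℝ) (hv : ∀ r ∈ t, v r ≠ 0) :
    (∑ r ∈ t, α r • ((v r, Matrix.vecMulVec (v r) (v r)) : Vec n)) ≠ 0 := by
  intro h0
  have htr := congrArg (fun p : Vec n => Matrix.trace p.2) h0
  simp only [Prod.snd_sum, Prod.smul_snd, Matrix.trace_sum, Matrix.trace_smul, Prod.snd_zero,
    Matrix.trace_zero, smul_eq_mul] at htr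
  have hpos : 0 < ∑ r ∈ t, α r * Matrix.trace (Matrix.vecMulVec (v r) (v r)) := by
    refine Finset.sum_pos (fun r hr => ?_) ht
    refine mul_pos (hα r hr) ?_
    have hvr := hv r hr
    obtain ⟨i, hi⟩ : ∃ i, v r i ≠ 0 := by
      by_contra hcon
      push_neg at hcon
      exact hvr (funext hcon)
    have : Matrix.trace (Matrix.vecMulVec (v r) (v r)) = ∑ j, v r j * v r j := by
      simp [Matrix.trace, Matrix.diag, Matrix.vecMulVec_apply]
    rw [this]
    refine Finset.sum_pos' (fun j _ => mul_self_nonneg _) ⟨i, Finset.mem_univ i, ?_⟩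
    exact mul_self_pos.mpr hi
  rw [htr] at hpos
  exact lt_irrefl 0 hpos

lemma diagG_pair {n : ℕ} (c v : Fin n → ℝ) :
    (((Matrix.diagonal c).mulVec v,
      Matrix.diagonal c * Matrix.vecMulVec v v * (Matrix.diagonal c).transpose) : Vec n)
      = ((fun i => c i * v i),
          Matrix.vecMulVec (fun i => c i * v i) (fun i => c i * v i)) := by
  refine Prod.ext ?_ ?_
  · funext i
    simp [Matrix.mulVec_diagonal]
  · ext i j
    simp [Matrix.diagonal_transpose, Matrix.mul_diagonal, Matrix.diagonal_mul,
      Matrix.vecMulVec_apply]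
    ring

lemma mono_inv_mulVec {n : ℕ} (c : Fin n → ℝ) (hc : ∀ i, c i ≠ 0) (x : Fin n → ℝ)
    (y : Fin n → ℕ) :
    mono ((Matrix.diagonal c)⁻¹.mulVec x) y = (mono c y)⁻¹ * mono x y := by
  have h1 : (Matrix.diagonal c)⁻¹ = Matrix.diagonal (fun i => (c i)⁻¹) := by
    refine Matrix.inv_eq_right_inv ?_
    rw [Matrix.diagonal_mul_diagonal]
    have : (fun i => c i * (c i)⁻¹) = fun _ : Fin n => (1:ℝ) := by
      funext i
      exact mul_inv_cancel₀ (hc i)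
    rw [this, Matrix.diagonal_one]
  rw [h1]
  have h2 : (Matrix.diagonal (fun i => (c i)⁻¹)).mulVec x = fun i => (c i)⁻¹ * x i := by
    funext i
    simp [Matrix.mulVec_diagonal]
  rw [h2]
  simp only [mono, mul_pow, Finset.prod_mul_distrib, ← inv_pow, ← Finset.prod_inv_distrib]



lemma pair_eq {n : ℕ} (R : Finset (Rxn n)) (κ : Rxn n → ℝ) (x : Fin n → ℝ) :
    ((drift R κ x, diffMat R κ x) : Vec n)
      = ∑ r ∈ R, (κ r * mono x r.1) •
          ((toR r.2 - toR r.1,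
            Matrix.vecMulVec (toR r.2 - toR r.1) (toR r.2 - toR r.1)) : Vec n) := by
  refine Prod.ext ?_ ?_
  · rw [Prod.fst_sum]
    simp only [Prod.smul_fst]
    rfl
  · rw [Prod.snd_sum]
    simp only [Prod.smul_snd]
    rfl

lemma pair_eq_G {n : ℕ} (R' : Finset (Rxn n)) (κ' : Rxn n → ℝ) (c : Fin n → ℝ)
    (hc : ∀ i, c i ≠ 0) (x : Fin n → ℝ) :
    (((Matrix.diagonal c).mulVec (drift R' κ' ((Matrix.diagonal c)⁻¹.mulVec x)),
      Matrix.diagonal c * diffMat R' κ' ((Matrix.diagonal c)⁻¹.mulVec x) *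
        Matrix.diagonal c) : Vec n)
      = ∑ r ∈ R', ((κ' r * (mono c r.1)⁻¹) * mono x r.1) •
          (((Matrix.diagonal c).mulVec (toR r.2 - toR r.1),
            Matrix.diagonal c * Matrix.vecMulVec (toR r.2 - toR r.1) (toR r.2 - toR r.1) *
              (Matrix.diagonal c).transpose) : Vec n) := by
  refine Prod.ext ?_ ?_
  · rw [Prod.fst_sum]
    simp only [Prod.smul_fst]
    have h1 : (Matrix.diagonal c).mulVec (drift R' κ' ((Matrix.diagonal c)⁻¹.mulVec x))
        = ∑ r ∈ R', (κ' r * mono ((Matrix.diagonal c)⁻¹.mulVec x) r.1) •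
            (Matrix.diagonal c).mulVec (toR r.2 - toR r.1) := by
      rw [drift, ← Matrix.mulVecLin_apply, map_sum]
      refine Finset.sum_congr rfl fun r _ => ?_
      rw [map_smul, Matrix.mulVecLin_apply]
    rw [h1]
    refine Finset.sum_congr rfl fun r _ => ?_
    rw [mono_inv_mulVec c hc, ← mul_assoc]
  · rw [Prod.snd_sum]
    simp only [Prod.smul_snd]
    have h1 : Matrix.diagonal c * diffMat R' κ' ((Matrix.diagonal c)⁻¹.mulVec x) *
          Matrix.diagonal c
        = ∑ r ∈ R', (κ' r * mono ((Matrix.diagonal c)⁻¹.mulVec x) r.1) •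
            (Matrix.diagonal c * Matrix.vecMulVec (toR r.2 - toR r.1) (toR r.2 - toR r.1) *
              Matrix.diagonal c) := by
      rw [diffMat, Finset.mul_sum, Finset.sum_mul]
      refine Finset.sum_congr rfl fun r _ => ?_
      rw [Matrix.mul_smul, Matrix.smul_mul]
    rw [h1]
    refine Finset.sum_congr rfl fun r _ => ?_
    rw [mono_inv_mulVec c hc, ← mul_assoc, Matrix.diagonal_transpose]

lemma conj_iff {n : ℕ} (R R' : Finset (Rxn n)) (c : Fin n → ℝ) (hc : ∀ i, c i ≠ 0)
    (κ κ' : Rxn n → ℝ) :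
    (∀ x ∈ posOrth n,
        drift R κ x
          = (Matrix.diagonal c).mulVec (drift R' κ' ((Matrix.diagonal c)⁻¹.mulVec x)) ∧
        diffMat R κ x
          = Matrix.diagonal c * diffMat R' κ' ((Matrix.diagonal c)⁻¹.mulVec x) *
              Matrix.diagonal c)
    ↔ ∀ y : Fin n → ℕ,
        ∑ r ∈ R.filter (fun r => r.1 = y), κ r •
          ((toR r.2 - toR r.1,
            Matrix.vecMulVec (toR r.2 - toR r.1) (toR r.2 - toR r.1)) : Vec n)
        = ∑ r ∈ R'.filter (fun r => r.1 = y), (κ' r * (mono c r.1)⁻¹) •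
          (((Matrix.diagonal c).mulVec (toR r.2 - toR r.1),
            Matrix.diagonal c * Matrix.vecMulVec (toR r.2 - toR r.1) (toR r.2 - toR r.1) *
              (Matrix.diagonal c).transpose) : Vec n) := by
  rw [← master]
  refine forall₂_congr fun x hx => ?_
  rw [← pair_eq, ← pair_eq_G R' κ' c hc x, Prod.ext_iff]

/-- Theorem (linear conjugacy, diagonal `G = diag c`): there exist positive rate vectors making
the two systems linearly conjugated at the level of generator coefficients iff the networks
have the same source complexes and for every source complex `y` the cones `Cone_R(y)` and
`Coneᴳ_{R'}(y)` intersect. -/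
theorem linear_conjugacy_iff_cones_intersect {n : ℕ} (R R' : Finset (Rxn n)) (hne : R ≠ R')
    (hR : ∀ r ∈ R, r.1 ≠ r.2) (hR' : ∀ r ∈ R', r.1 ≠ r.2)
    (c : Fin n → ℝ) (hc : ∀ i, 0 < c i) :
    (∃ κ κ' : Rxn n → ℝ, (∀ r ∈ R, 0 < κ r) ∧ (∀ r ∈ R', 0 < κ' r) ∧
      ∀ x ∈ posOrth n,
        drift R κ x
          = (Matrix.diagonal c).mulVec (drift R' κ' ((Matrix.diagonal c)⁻¹.mulVec x)) ∧
        diffMat R κ x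
          = Matrix.diagonal c * diffMat R' κ' ((Matrix.diagonal c)⁻¹.mulVec x) *
              Matrix.diagonal c)
    ↔
    ((∀ y : Fin n → ℕ, (∃ r ∈ R, r.1 = y) ↔ (∃ r ∈ R', r.1 = y)) ∧
      ∀ y : Fin n → ℕ, (∃ r ∈ R, r.1 = y) →
        (cone R y ∩ coneG (Matrix.diagonal c) R' y).Nonempty) := by
    classical
  have hc0 : ∀ i, c i ≠ 0 := fun i => ne_of_gt (hc i)
  constructor
  · rintro ⟨κ, κ', hκ, hκ', heq⟩
    have hPQ := (conj_iff R R' c hc0 κ κ').mp heq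
    have nzR : ∀ y : Fin n → ℕ, (R.filter (fun r => r.1 = y)).Nonempty →
        (∑ r ∈ R.filter (fun r => r.1 = y), κ r •
          ((toR r.2 - toR r.1,
            Matrix.vecMulVec (toR r.2 - toR r.1) (toR r.2 - toR r.1)) : Vec n)) ≠ 0 := by
      intro y hne'
      refine sum_pair_ne_zero _ hne' κ (fun r hr => hκ r (Finset.mem_filter.mp hr).1)
        (fun r => toR r.2 - toR r.1)
        (fun r hr => toR_sub_ne_zero (hR r (Finset.mem_filter.mp hr).1))
    have nzR' : ∀ y : Fin n → ℕ, (R'.filter (fun r => r.1 = y)).Nonempty →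
        (∑ r ∈ R'.filter (fun r => r.1 = y), (κ' r * (mono c r.1)⁻¹) •
          (((Matrix.diagonal c).mulVec (toR r.2 - toR r.1),
            Matrix.diagonal c * Matrix.vecMulVec (toR r.2 - toR r.1) (toR r.2 - toR r.1) *
              (Matrix.diagonal c).transpose) : Vec n)) ≠ 0 := by
      intro y hne'
      have hrw : ∀ r ∈ R'.filter (fun r => r.1 = y),
          (κ' r * (mono c r.1)⁻¹) •
            (((Matrix.diagonal c).mulVec (toR r.2 - toR r.1),
              Matrix.diagonal c * Matrix.vecMulVec (toR r.2 - toR r.1) (toR r.2 - toR r.1) *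
                (Matrix.diagonal c).transpose) : Vec n)
          = (κ' r * (mono c r.1)⁻¹) •
            (((fun i => c i * (toR r.2 - toR r.1) i),
              Matrix.vecMulVec (fun i => c i * (toR r.2 - toR r.1) i)
                (fun i => c i * (toR r.2 - toR r.1) i)) : Vec n) := by
        intro r _
        rw [diagG_pair]
      rw [Finset.sum_congr rfl hrw]
      refine sum_pair_ne_zero _ hne' _
        (fun r hr => mul_pos (hκ' r (Finset.mem_filter.mp hr).1)
          (inv_pos.mpr (mono_pos hc r.1)))
        (fun r => fun i => c i * (toR r.2 - toR r.1) i) (fun r hr => ?_)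
      have hv := toR_sub_ne_zero (hR' r (Finset.mem_filter.mp hr).1)
      obtain ⟨i, hi⟩ : ∃ i, (toR r.2 - toR r.1) i ≠ 0 := by
        by_contra hcon
        push_neg at hcon
        exact hv (funext hcon)
      intro h0
      exact mul_ne_zero (hc0 i) hi (congrFun h0 i)
    have hsrc : ∀ y : Fin n → ℕ, (∃ r ∈ R, r.1 = y) ↔ (∃ r ∈ R', r.1 = y) := by
      intro y
      rw [← Finset.filter_nonempty_iff, ← Finset.filter_nonempty_iff]
      constructor
      · intro h1
        by_contra h2
        rw [Finset.not_nonempty_iff_eq_empty] at h2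
        have := nzR y h1
        rw [hPQ y, h2] at this
        simp at this
      · intro h1
        by_contra h2
        rw [Finset.not_nonempty_iff_eq_empty] at h2
        have := nzR' y h1
        rw [← hPQ y, h2] at this
        simp at this
    refine ⟨hsrc, fun y hy => ?_⟩
    refine ⟨∑ r ∈ R.filter (fun r => r.1 = y), κ r •
      ((toR r.2 - toR r.1,
        Matrix.vecMulVec (toR r.2 - toR r.1) (toR r.2 - toR r.1)) : Vec n), ?_, ?_⟩
    · exact ⟨κ, fun r hr => hκ r (Finset.mem_filter.mp hr).1, rfl⟩
    · refine ⟨fun r => κ' r * (mono c r.1)⁻¹, fun r hr =>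
        mul_pos (hκ' r (Finset.mem_filter.mp hr).1) (inv_pos.mpr (mono_pos hc r.1)), ?_⟩
      exact hPQ y
  · rintro ⟨hsrc, hcone⟩
    have h2 : ∀ y : Fin n → ℕ, ∃ α β : Rxn n → ℝ,
        (∃ r ∈ R, r.1 = y) →
        ((∀ r ∈ R.filter (fun r => r.1 = y), 0 < α r) ∧
         (∀ r ∈ R'.filter (fun r => r.1 = y), 0 < β r) ∧
         ∑ r ∈ R.filter (fun r => r.1 = y), α r •
            ((toR r.2 - toR r.1,
              Matrix.vecMulVec (toR r.2 - toR r.1) (toR r.2 - toR r.1)) : Vec n)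
          = ∑ r ∈ R'.filter (fun r => r.1 = y), β r •
            (((Matrix.diagonal c).mulVec (toR r.2 - toR r.1),
              Matrix.diagonal c * Matrix.vecMulVec (toR r.2 - toR r.1) (toR r.2 - toR r.1) *
                (Matrix.diagonal c).transpose) : Vec n)) := by
      intro y
      by_cases hy : ∃ r ∈ R, r.1 = y
      · obtain ⟨p, ⟨α, hα, hpα⟩, ⟨β, hβ, hpβ⟩⟩ := hcone y hy
        exact ⟨α, β, fun _ => ⟨hα, hβ, by rw [← hpα, ← hpβ]⟩⟩
      · exact ⟨fun _ => 1, fun _ => 1, fun h => absurd h hy⟩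
    choose α β hαβ using h2
    refine ⟨fun r => α r.1 r, fun r => β r.1 r * mono c r.1, ?_, ?_, ?_⟩
    · intro r hr
      exact (hαβ r.1 ⟨r, hr, rfl⟩).1 r (Finset.mem_filter.mpr ⟨hr, rfl⟩)
    · intro r hr
      have hsy : ∃ s ∈ R, s.1 = r.1 := (hsrc r.1).mpr ⟨r, hr, rfl⟩
      exact mul_pos ((hαβ r.1 hsy).2.1 r (Finset.mem_filter.mpr ⟨hr, rfl⟩)) (mono_pos hc r.1)
    · refine (conj_iff R R' c hc0 _ _).mpr fun y => ?_
      by_cases hy : ∃ r ∈ R, r.1 = y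
      · obtain ⟨hα, hβ, heqy⟩ := hαβ y hy
        have hL : ∀ r ∈ R.filter (fun r => r.1 = y),
            α r.1 r •
              ((toR r.2 - toR r.1,
                Matrix.vecMulVec (toR r.2 - toR r.1) (toR r.2 - toR r.1)) : Vec n)
            = α y r •
              ((toR r.2 - toR r.1,
                Matrix.vecMulVec (toR r.2 - toR r.1) (toR r.2 - toR r.1)) : Vec n) := by
          intro r hr
          rw [(Finset.mem_filter.mp hr).2]
        have hRr : ∀ r ∈ R'.filter (fun r => r.1 = y),
            ((β r.1 r * mono c r.1) * (mono c r.1)⁻¹) •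
              (((Matrix.diagonal c).mulVec (toR r.2 - toR r.1),
                Matrix.diagonal c * Matrix.vecMulVec (toR r.2 - toR r.1) (toR r.2 - toR r.1) *
                  (Matrix.diagonal c).transpose) : Vec n)
            = β y r •
              (((Matrix.diagonal c).mulVec (toR r.2 - toR r.1),
                Matrix.diagonal c * Matrix.vecMulVec (toR r.2 - toR r.1) (toR r.2 - toR r.1) *
                  (Matrix.diagonal c).transpose) : Vec n) := by
          intro r hr
          rw [mul_assoc, mul_inv_cancel₀ (ne_of_gt (mono_pos hc r.1)), mul_one,
            (Finset.mem_filter.mp hr).2]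
        rw [Finset.sum_congr rfl hL, Finset.sum_congr rfl hRr]
        exact heqy
      · have hy' : ¬ ∃ r ∈ R', r.1 = y := fun h => hy ((hsrc y).mpr h)
        have e1 : R.filter (fun r => r.1 = y) = ∅ := by
          rw [Finset.filter_eq_empty_iff]
          exact fun r hr hr1 => hy ⟨r, hr, hr1⟩
        have e2 : R'.filter (fun r => r.1 = y) = ∅ := by
          rw [Finset.filter_eq_empty_iff]
          exact fun r hr hr1 => hy' ⟨r, hr, hr1⟩
        rw [e1, e2]
        simp
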